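/- arXiv:2005.03620 — 5 statements merged into one kernel-verified Lean document; each statement's English description precedes it below -/
import Mathlib

section
/- For any admissibility-based AF semantics σ, the induced JSBAF semantics sup(σ) is deductive: for every JSBAF J = (Ar, →, ⇒), every sup(σ)-extension E of J, every S ⊆ E and every a ∈ Ar with (S, a) ∈ ⇒, we have a ∈ E. Here it suffices to prove the case |S| = 1: if J is a JSBAF, E' is an admissible set of the flattening ♭(J), E = E' ∩ Ar, ({b}, a) ∈ ⇒, and b ∈ E, then a ∈ E. -/
/-- S is conflict-free: no two elements of S attack each other. -/
def ConflictFree {M : Type*} (att : M → M → Prop) (S : Set M) : Prop :=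
  ∀ b ∈ S, ∀ c ∈ S, ¬ att b c

/-- a is defended by S: every attacker of a is attacked by some element of S. -/
def Defends {M : Type*} (att : M → M → Prop) (S : Set M) (a : M) : Prop :=
  ∀ b, att b a → ∃ c ∈ S, att c b

/-- S is admissible: conflict-free and self-defending. -/
def Admissible {M : Type*} (att : M → M → Prop) (S : Set M) : Prop :=
  ConflictFree att S ∧ ∀ a ∈ S, Defends att S a

/-- Deductiveness of sup(σ), singleton-support case: in the flattening of a JSBAF,
a singleton support ({b}, a) ∈ ⇒ is replaced by attacks a → ā and ā → b, with a
being the only attacker of ā.  If E' is an admissible set of the flattening,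
E = E' ∩ Ar, and b ∈ E, then a ∈ E. -/
theorem sup_deductive_singleton {M : Type*} (att : M → M → Prop) (Ar : Set M)
    (E' : Set M) (hAdm : Admissible att E')
    (a abar b : M) (haAr : a ∈ Ar)
    (h1 : att a abar) (h2 : att abar b)
    (hOnly : ∀ x, att x abar → x = a)
    (E : Set M) (hE : E = E' ∩ Ar)
    (hb : b ∈ E) : a ∈ E := by
  subst hE
  obtain ⟨hbE', _⟩ := hb
  obtain ⟨c, hcE', hc⟩ := hAdm.2 b hbE' abar h2
  rw [hOnly c hc] at hcE'
  exact ⟨hcE', haAr⟩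
end

section
/- Let J = (Ar, →, ⇒) be a JSBAF with a support (S, d) ∈ ⇒ where |S| > 1, flattened as follows: for each a ∈ S the flattened AF contains attacks a → ā, and for each a ∈ S a meta-argument e_a := e({d} ∪ (S\{a})) with attacks e_a → a, d → e_a, and b̄ → e_a for each b ∈ S\{a}, and these are the only attackers of e_a. If E' is an admissible set of the flattened AF containing all elements of S, then d ∈ E'. -/
/-- Case 2 of Lemma 1 (|S| > 1): a joint support (S, d) with |S| > 1 is flattened
into attacks a → ā for each a ∈ S, and meta-arguments e_a = e({d} ∪ (S\{a})) with
attacks e_a → a, d → e_a and b̄ → e_a for each b ∈ S\{a}, these being the only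
attackers of e_a.  If E' is an admissible set of the flattened AF containing all of
S, then d ∈ E'. -/
theorem sup_deductive_joint {M : Type*} (att : M → M → Prop)
    (S : Set M) (d : M) (bar e : M → M)
    (hcard : ∃ a ∈ S, ∃ b ∈ S, a ≠ b)
    (h1 : ∀ a ∈ S, att a (bar a))
    (h2 : ∀ a ∈ S, att (e a) a)
    (h3 : ∀ a ∈ S, att d (e a))
    (h4 : ∀ a ∈ S, ∀ b ∈ S, b ≠ a → att (bar b) (e a))
    (hOnly : ∀ a ∈ S, ∀ x, att x (e a) → x = d ∨ ∃ b ∈ S, b ≠ a ∧ x = bar b)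
    (E' : Set M) (hAdm : Admissible att E') (hS : S ⊆ E') : d ∈ E' := by
  obtain ⟨a, ha, -⟩ := hcard
  obtain ⟨c, hcE, hcatt⟩ := hAdm.2 a (hS ha) (e a) (h2 a ha)
  rcases hOnly a ha c hcatt with rfl | ⟨b, hb, -, rfl⟩
  · exact hcE
  · exact absurd (h1 b hb) (hAdm.1 b (hS hb) (bar b) hcE)
end

section
/- Let σ be a deductive JSBAF semantics. Then Deductive ASPIC− satisfies closure under σ: for every argumentation system AS = (R_s, R_d, n) and every set C of DA− conclusions of AS under σ, the closure of C under the strict rules R_s equals C. -/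
/-- Arguments: built by applying a rule (strict if the Bool is `true`, defeasible
if `false`) to a list of immediate sub-arguments, yielding a conclusion. -/
inductive Arg (L : Type) : Type where
  | node : Bool → List (Arg L) → L → Arg L

/-- The conclusion of an argument. -/
def Arg.conc {L : Type} : Arg L → L
  | .node _ _ φ => φ

/-- Arguments on the basis of an argumentation system with strict rules Rs and
defeasible rules Rd (a rule is a pair of a list of antecedents and a consequent). -/
inductive IsArg {L : Type} (Rs Rd : Set (List L × L)) : Arg L → Prop where
  | strict {subs : List (Arg L)} {φ : L} :
      (subs.map Arg.conc, φ) ∈ Rs → (∀ A ∈ subs, IsArg Rs Rd A) →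
      IsArg Rs Rd (.node true subs φ)
  | defeasible {subs : List (Arg L)} {φ : L} :
      (subs.map Arg.conc, φ) ∈ Rd → (∀ A ∈ subs, IsArg Rs Rd A) →
      IsArg Rs Rd (.node false subs φ)

/-- An argument is strict iff it uses only strict rules (DefRules(A) = ∅). -/
inductive Arg.Strict {L : Type} : Arg L → Prop where
  | node {subs : List (Arg L)} {φ : L} :
      (∀ A ∈ subs, Arg.Strict A) → Arg.Strict (.node true subs φ)

/-- Sub-argument relation: `Arg.SubArg B A` means B ∈ Sub(A). -/
inductive Arg.SubArg {L : Type} : Arg L → Arg L → Prop where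
  | refl (A : Arg L) : Arg.SubArg A A
  | step {B A : Arg L} {b : Bool} {subs : List (Arg L)} {φ : L} :
      A ∈ subs → Arg.SubArg B A → Arg.SubArg B (.node b subs φ)

/-- φ = −ψ : φ = ¬ψ or ψ = ¬φ. -/
def IsNeg {L : Type} (neg : L → L) (φ ψ : L) : Prop := φ = neg ψ ∨ ψ = neg φ

/-- A unrestrictedly rebuts B iff Conc(A) = −Conc(B') for a defeasible B' ∈ Sub(B). -/
def Rebuts {L : Type} (neg : L → L) (A B : Arg L) : Prop :=
  ∃ B', Arg.SubArg B' B ∧ ¬ B'.Strict ∧ IsNeg neg A.conc B'.conc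

/-- A undercuts B iff Conc(A) = −n(r) for some B' ∈ Sub(B) with defeasible top rule r. -/
def Undercuts {L : Type} (neg : L → L) (n : List L × L → Option L) (A B : Arg L) : Prop :=
  ∃ (subs : List (Arg L)) (φ ψ : L), Arg.SubArg (Arg.node false subs φ) B ∧
    n (subs.map Arg.conc, φ) = some ψ ∧ IsNeg neg A.conc ψ

/-- The attack relation of (Deductive) ASPIC−: undercut or unrestricted rebuttal. -/
def Attacks {L : Type} (neg : L → L) (n : List L × L → Option L) (A B : Arg L) : Prop :=
  Undercuts neg n A B ∨ Rebuts neg A B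

/-- An argumentation system is consistent iff there are no strict arguments A, B
on its basis with Conc(A) = −Conc(B). -/
def ConsistentAS {L : Type} (neg : L → L) (Rs Rd : Set (List L × L)) : Prop :=
  ¬ ∃ A B : Arg L, IsArg Rs Rd A ∧ IsArg Rs Rd B ∧ A.Strict ∧ B.Strict ∧
      IsNeg neg A.conc B.conc

/-- Cl_{R_s}(C): the smallest superset of C closed under the strict rules. -/
inductive Cl {L : Type} (Rs : Set (List L × L)) (C : Set L) : L → Prop where
  | base {φ : L} : φ ∈ C → Cl Rs C φ
  | rule {l : List L} {φ : L} : (l, φ) ∈ Rs → (∀ a ∈ l, Cl Rs C a) → Cl Rs C φ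

/-- The set of arguments of the JSBAF J_DA−(AS). -/
def DAArgs {L : Type} (Rs Rd : Set (List L × L)) : Set (Arg L) := {A | IsArg Rs Rd A}

/-- The deductive joint support relation of Deductive ASPIC−:
(S, A) ∈ ⇒' iff A is of the form S ↦ φ (an argument with strict top rule whose
set of immediate sub-arguments is S). -/
def DASup {L : Type} (Rs Rd : Set (List L × L)) (S : Set (Arg L)) (A : Arg L) : Prop :=
  IsArg Rs Rd A ∧ ∃ (subs : List (Arg L)) (φ : L),
    A = Arg.node true subs φ ∧ S = {B | B ∈ subs}

/-!
The DA− conclusions of an extension `E` are already closed under a strict rule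
`a₁, …, aₙ ↦ b`: choose arguments `A₁, …, Aₙ ∈ E` concluding the `aᵢ`; the argument
`A₁, …, Aₙ ↦ b` is jointly supported by them, so it lies in `E` by deductiveness, and it
concludes `b`. A set closed under the strict rules is its own closure.
-/

theorem Cl.mem_iff_of_closed {L : Type} {Rs : Set (List L × L)} {C : Set L}
    (hclosed : ∀ l φ, (l, φ) ∈ Rs → (∀ a ∈ l, a ∈ C) → φ ∈ C) (φ : L) :
    Cl Rs C φ ↔ φ ∈ C := by
  refine ⟨fun h => ?_, Cl.base⟩
  induction h with
  | base hφ => exact hφ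
  | rule hr _ ih => exact hclosed _ _ hr ih

theorem List.exists_map_eq_of_forall_mem_image {α β : Type*} {f : α → β} {s : Set α} :
    ∀ {l : List β}, (∀ b ∈ l, b ∈ f '' s) → ∃ l' : List α, l'.map f = l ∧ ∀ a ∈ l', a ∈ s
  | [], _ => ⟨[], rfl, by simp⟩
  | b :: l, h => by
    obtain ⟨a, ha, rfl⟩ := h b mem_cons_self
    obtain ⟨l', rfl, hl'⟩ :=
      exists_map_eq_of_forall_mem_image fun b hb => h b (mem_cons_of_mem _ hb)
    exact ⟨a :: l', rfl, by simpa using ⟨ha, hl'⟩⟩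

theorem conc_mem_image_of_strict_rule {L : Type} {Rs Rd : Set (List L × L)} {E : Set (Arg L)}
    (hE : E ⊆ DAArgs Rs Rd) (hsup : ∀ S ⊆ E, ∀ A, DASup Rs Rd S A → A ∈ E)
    {l : List L} {φ : L} (hr : (l, φ) ∈ Rs) (hl : ∀ a ∈ l, a ∈ Arg.conc '' E) :
    φ ∈ Arg.conc '' E := by
  obtain ⟨subs, rfl, hsubs⟩ := List.exists_map_eq_of_forall_mem_image hl
  have harg : IsArg Rs Rd (.node true subs φ) := .strict hr fun A hA => hE (hsubs A hA)
  exact ⟨_, hsup _ hsubs _ ⟨harg, subs, φ, rfl, rfl⟩, rfl⟩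

/-- A JSBAF semantics σ (here over the arguments of type `Arg L`, taking the
argument set Ar, attack relation and joint support relation of a JSBAF to its set
of extensions, each a subset of Ar) is deductive iff extensions are closed under
the joint support relation.  If σ is deductive, then Deductive ASPIC− satisfies
closure under σ: every set C of DA− conclusions of an argumentation system
AS = (Rs, Rd, n) under σ satisfies Cl_{R_s}(C) = C. -/
theorem da_closure {L : Type} (neg : L → L) (Rs Rd : Set (List L × L))
    (n : List L × L → Option L)
    (σ : Set (Arg L) → (Arg L → Arg L → Prop) → (Set (Arg L) → Arg L → Prop) →
      Set (Set (Arg L)))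
    (hExt : ∀ (Ar : Set (Arg L)) (att : Arg L → Arg L → Prop)
      (sup : Set (Arg L) → Arg L → Prop), ∀ E ∈ σ Ar att sup, E ⊆ Ar)
    (hDeductive : ∀ (Ar : Set (Arg L)) (att : Arg L → Arg L → Prop)
      (sup : Set (Arg L) → Arg L → Prop), ∀ E ∈ σ Ar att sup,
      ∀ S ⊆ E, ∀ A, sup S A → A ∈ E)
    (E : Set (Arg L)) (hE : E ∈ σ (DAArgs Rs Rd) (Attacks neg n) (DASup Rs Rd))
    (C : Set L) (hC : C = {φ | ∃ A ∈ E, A.conc = φ}) :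
    ∀ φ, Cl Rs C φ ↔ φ ∈ C := by
  subst hC
  exact Cl.mem_iff_of_closed fun l φ hr hl =>
    conc_mem_image_of_strict_rule (hExt _ _ _ E hE) (hDeductive _ _ _ E hE) hr hl
end

section
/- Let σ be a conflict-free JSBAF semantics. Then Deductive ASPIC− satisfies direct consistency under σ: for every consistent argumentation system AS and every set C of DA− conclusions of AS under σ, there is no formula φ with both φ ∈ C and ¬φ ∈ C. -/
/-- If σ is a conflict-free JSBAF semantics (no two elements of any extension
attack each other, and extensions are subsets of the argument set), then
Deductive ASPIC− satisfies direct consistency under σ: for every consistent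
argumentation system AS and every set C of DA− conclusions of AS under σ, there
is no formula φ with both φ ∈ C and ¬φ ∈ C. -/
theorem da_direct_consistency {L : Type} (neg : L → L) (Rs Rd : Set (List L × L))
    (n : List L × L → Option L)
    (σ : Set (Arg L) → (Arg L → Arg L → Prop) → (Set (Arg L) → Arg L → Prop) →
      Set (Set (Arg L)))
    (hExt : ∀ (Ar : Set (Arg L)) (att : Arg L → Arg L → Prop)
      (sup : Set (Arg L) → Arg L → Prop), ∀ E ∈ σ Ar att sup, E ⊆ Ar)
    (hCF : ∀ (Ar : Set (Arg L)) (att : Arg L → Arg L → Prop)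
      (sup : Set (Arg L) → Arg L → Prop), ∀ E ∈ σ Ar att sup,
      ∀ a ∈ E, ∀ b ∈ E, ¬ att a b)
    (hCons : ConsistentAS neg Rs Rd)
    (E : Set (Arg L)) (hE : E ∈ σ (DAArgs Rs Rd) (Attacks neg n) (DASup Rs Rd))
    (C : Set L) (hC : C = {φ | ∃ A ∈ E, A.conc = φ}) :
    ¬ ∃ φ, φ ∈ C ∧ neg φ ∈ C := by
  rintro ⟨φ, hφ, hnφ⟩
  subst hC
  obtain ⟨A, hA, hAc⟩ := hφ
  obtain ⟨B, hB, hBc⟩ := hnφ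
  have hAar : IsArg Rs Rd A := hExt _ _ _ E hE hA
  have hBar : IsArg Rs Rd B := hExt _ _ _ E hE hB
  by_cases hAs : A.Strict
  · by_cases hBs : B.Strict
    · exact hCons ⟨A, B, hAar, hBar, hAs, hBs, Or.inr (by rw [hAc, hBc])⟩
    · exact hCF _ _ _ E hE A hA B hB (Or.inr ⟨B, Arg.SubArg.refl B, hBs,
        Or.inr (by rw [hAc, hBc])⟩)
  · exact hCF _ _ _ E hE B hB A hA (Or.inr ⟨A, Arg.SubArg.refl A, hAs,
      Or.inl (by rw [hAc, hBc])⟩)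
end

section
/- Let AS be a consistent argumentation system and E a conflict-free (with respect to unrestricted rebuttal and undercut) set of arguments on the basis of AS. Then the set of conclusions {Conc(A) : A ∈ E} does not contain any pair φ, ¬φ. -/
/-- If AS is a consistent argumentation system and E is a set of arguments on the
basis of AS that is conflict-free with respect to undercut and unrestricted
rebuttal, then the set of conclusions {Conc(A) : A ∈ E} contains no pair φ, ¬φ. -/
theorem conflict_free_consistent_conclusions {L : Type} (neg : L → L)
    (Rs Rd : Set (List L × L)) (n : List L × L → Option L)
    (hCons : ConsistentAS neg Rs Rd)
    (E : Set (Arg L)) (hArgs : ∀ A ∈ E, IsArg Rs Rd A)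
    (hCF : ∀ A ∈ E, ∀ B ∈ E, ¬ Attacks neg n A B) :
    ¬ ∃ φ, φ ∈ {ψ | ∃ A ∈ E, A.conc = ψ} ∧ neg φ ∈ {ψ | ∃ A ∈ E, A.conc = ψ} := by
  rintro ⟨φ, ⟨F, hF, hFc⟩, ⟨F', hF', hF'c⟩⟩
  by_cases hS : F.Strict
  · by_cases hS' : F'.Strict
    · exact hCons ⟨F, F', hArgs F hF, hArgs F' hF', hS, hS',
        Or.inr (by rw [hFc, hF'c])⟩
    · exact hCF F hF F' hF' (Or.inr ⟨F', Arg.SubArg.refl F', hS',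
        Or.inr (by rw [hFc, hF'c])⟩)
  · exact hCF F' hF' F hF (Or.inr ⟨F, Arg.SubArg.refl F, hS,
      Or.inl (by rw [hFc, hF'c])⟩)
end
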